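/- arXiv:2408.12078 — 7 statements merged into one kernel-verified Lean document; each statement's English description precedes it below -/
import Mathlib

section
/- The L1 prestige of every vertex lies in the interval [0, 1]: 0 ≤ Pres(v_k) ≤ 1 for all k. -/
open Finset

noncomputable def SG (V : Type*) [Fintype V] [DecidableEq V] [Nontrivial V]
    (d : V → V → ℝ) : ℝ :=
  Finset.univ.offDiag.inf'
    (by obtain ⟨a, b, hab⟩ := exists_pair_ne V
        exact ⟨(a, b), Finset.mem_offDiag.mpr ⟨Finset.mem_univ a, Finset.mem_univ b, hab⟩⟩)
    (fun p => d p.1 p.2 / d p.2 p.1)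

noncomputable def Pres (V : Type*) [Fintype V] [DecidableEq V] [Nontrivial V]
    (d : V → V → ℝ) (η : V → ℝ) (k : V) : ℝ :=
  1 - SG V d *
    (Finset.univ.erase k).sup'
      (by obtain ⟨j, hj⟩ := exists_ne k
          exact ⟨j, Finset.mem_erase.mpr ⟨hj, Finset.mem_univ j⟩⟩)
      (fun j => max 0 ((∑ i, η i * (d i k - d i j)) / ((∑ i, η i) * d k j)))

theorem pres_mem_unit_interval (V : Type*) [Fintype V] [DecidableEq V] [Nontrivial V]
    (d : V → V → ℝ) (η : V → ℝ)
    (hpos : ∀ x y : V, x ≠ y → 0 < d x y)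
    (hzero : ∀ x : V, d x x = 0)
    (htri : ∀ x y z : V, d x z ≤ d x y + d y z)
    (hη : ∀ j : V, 0 ≤ η j) (hsum : 0 < ∑ j, η j) (k : V) :
    0 ≤ Pres V d η k ∧ Pres V d η k ≤ 1 := by
  have hSpos : 0 < SG V d := by
    rw [SG, Finset.lt_inf'_iff]
    rintro ⟨a, b⟩ hp
    have hab := (Finset.mem_offDiag.mp hp).2.2
    exact div_pos (hpos a b hab) (hpos b a hab.symm)
  unfold Pres
  constructor
  · rw [sub_nonneg]
    have hsup : (Finset.univ.erase k).sup'
        (by obtain ⟨j, hj⟩ := exists_ne k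
            exact ⟨j, Finset.mem_erase.mpr ⟨hj, Finset.mem_univ j⟩⟩)
        (fun j => max 0 ((∑ i, η i * (d i k - d i j)) / ((∑ i, η i) * d k j)))
        ≤ 1 / SG V d := by
      apply Finset.sup'_le
      intro j hj
      have hjk : j ≠ k := (Finset.mem_erase.mp hj).1
      have hdkj := hpos k j hjk.symm
      have hdjk := hpos j k hjk
      have hS_le : SG V d ≤ d k j / d j k := by
        rw [SG]
        have hmem : ((k, j) : V × V) ∈ Finset.univ.offDiag :=
          Finset.mem_offDiag.mpr ⟨Finset.mem_univ _, Finset.mem_univ _, hjk.symm⟩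
        exact Finset.inf'_le (fun p => d p.1 p.2 / d p.2 p.1) hmem
      have hinv : d j k / d k j ≤ 1 / SG V d := by
        rw [div_le_div_iff₀ hdkj hSpos]
        calc d j k * SG V d ≤ d j k * (d k j / d j k) :=
              mul_le_mul_of_nonneg_left hS_le hdjk.le
          _ = d k j := by field_simp
          _ = 1 * d k j := (one_mul _).symm
      apply max_le (by positivity)
      refine le_trans ?_ hinv
      rw [div_le_div_iff₀ (by positivity) hdkj]
      have hnum : (∑ i, η i * (d i k - d i j)) ≤ (∑ i, η i) * d j k := by
        rw [Finset.sum_mul]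
        apply Finset.sum_le_sum
        intro i _
        apply mul_le_mul_of_nonneg_left _ (hη i)
        linarith [htri i j k]
      nlinarith [mul_le_mul_of_nonneg_right hnum hdkj.le]
    calc SG V d * _ ≤ SG V d * (1 / SG V d) :=
          mul_le_mul_of_nonneg_left hsup hSpos.le
      _ = 1 := by field_simp
  · obtain ⟨j, hj⟩ := exists_ne k
    have hmem : j ∈ Finset.univ.erase k := Finset.mem_erase.mpr ⟨hj, Finset.mem_univ j⟩
    have hle := Finset.le_sup'
      (f := fun j => max 0 ((∑ i, η i * (d i k - d i j)) / ((∑ i, η i) * d k j)))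
      hmem
    have : (0:ℝ) ≤ SG V d * _ :=
      mul_nonneg hSpos.le (le_trans (le_max_left 0 _) hle)
    linarith
end

section
/- Dominant multiplicity implies maximal prestige: if η_k/η_· ≥ 1/(1 + S(G)), then Pres(v_k) = 1. -/
open Finset

theorem dominant_multiplicity_pres_eq_one (V : Type*) [Fintype V] [DecidableEq V] [Nontrivial V]
    (d : V → V → ℝ) (η : V → ℝ)
    (hpos : ∀ x y : V, x ≠ y → 0 < d x y)
    (hzero : ∀ x : V, d x x = 0)
    (htri : ∀ x y z : V, d x z ≤ d x y + d y z)
    (hη : ∀ j : V, 0 ≤ η j) (hsum : 0 < ∑ j, η j)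
    (k : V) (hk : 1 / (1 + SG V d) ≤ η k / (∑ i, η i)) :
    Pres V d η k = 1 := by
  have hSpos : 0 < SG V d := by
    apply Finset.lt_inf'_iff _ |>.mpr
    rintro ⟨a, b⟩ hp
    have hab : a ≠ b := (Finset.mem_offDiag.mp hp).2.2
    exact div_pos (hpos a b hab) (hpos b a hab.symm)
  -- From hk : η· ≤ η k * (1 + S)
  have h1S : (0:ℝ) < 1 + SG V d := by linarith
  have hdom : (∑ i, η i) ≤ η k * (1 + SG V d) := by
    have := (div_le_div_iff₀ h1S hsum).mp hk
    linarith
  -- each term is zero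
  have key : ∀ j ∈ Finset.univ.erase k,
      max 0 ((∑ i, η i * (d i k - d i j)) / ((∑ i, η i) * d k j)) = 0 := by
    intro j hj
    have hjk : j ≠ k := (Finset.mem_erase.mp hj).1
    have hdkj : 0 < d k j := hpos k j hjk.symm
    have hdjk : 0 < d j k := hpos j k hjk
    have hSle : SG V d ≤ d k j / d j k := by
      unfold SG
      have hm : (k, j) ∈ Finset.univ.offDiag :=
        Finset.mem_offDiag.mpr ⟨Finset.mem_univ k, Finset.mem_univ j, hjk.symm⟩
      exact Finset.inf'_le (fun p => d p.1 p.2 / d p.2 p.1) hm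
    -- numerator bound
    have hnum : (∑ i, η i * (d i k - d i j)) ≤
        (∑ i, η i) * d j k - η k * (d j k + d k j) := by
      have : ∀ i, η i * (d i k - d i j) ≤
          η i * d j k - (if i = k then η k * (d j k + d k j) else 0) := by
        intro i
        by_cases hik : i = k
        · subst hik
          simp [hzero]
          nlinarith [hη i]
        · simp [hik]
          have : d i k ≤ d i j + d j k := htri i j k
          nlinarith [hη i]
      calc (∑ i, η i * (d i k - d i j))
          ≤ ∑ i, (η i * d j k - (if i = k then η k * (d j k + d k j) else 0)) :=
            Finset.sum_le_sum fun i _ => this i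
        _ = (∑ i, η i) * d j k - η k * (d j k + d k j) := by
            rw [Finset.sum_sub_distrib, Finset.sum_ite_eq' Finset.univ k]
            simp [Finset.sum_mul]
    have hS2 : SG V d * d j k ≤ d k j := by
      rw [div_eq_mul_inv] at hSle
      calc SG V d * d j k ≤ (d k j * (d j k)⁻¹) * d j k := by
            apply mul_le_mul_of_nonneg_right hSle hdjk.le
        _ = d k j := by field_simp
    have hnum0 : (∑ i, η i * (d i k - d i j)) ≤ 0 := by
      have h3 : ((∑ i, η i) - η k) * d j k ≤ η k * SG V d * d j k := by
        apply mul_le_mul_of_nonneg_right _ hdjk.le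
        nlinarith
      nlinarith [hη k]
    have hden : 0 < (∑ i, η i) * d k j := mul_pos hsum hdkj
    have : (∑ i, η i * (d i k - d i j)) / ((∑ i, η i) * d k j) ≤ 0 :=
      div_nonpos_of_nonpos_of_nonneg hnum0 hden.le
    exact max_eq_left this
  have hsup : (Finset.univ.erase k).sup'
      (by obtain ⟨j, hj⟩ := exists_ne k
          exact ⟨j, Finset.mem_erase.mpr ⟨hj, Finset.mem_univ j⟩⟩)
      (fun j => max 0 ((∑ i, η i * (d i k - d i j)) / ((∑ i, η i) * d k j))) = 0 := by
    apply le_antisymm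
    · apply Finset.sup'_le
      intro j hj
      exact le_of_eq (key j hj)
    · obtain ⟨j, hj⟩ := exists_ne k
      have hjm : j ∈ Finset.univ.erase k := Finset.mem_erase.mpr ⟨hj, Finset.mem_univ j⟩
      calc (0:ℝ) = _ := (key j hjm).symm
        _ ≤ _ := Finset.le_sup' (fun j => max 0 ((∑ i, η i * (d i k - d i j)) / ((∑ i, η i) * d k j))) hjm
  unfold Pres
  rw [hsup]
  ring
end

section
/- Strictly dominant multiplicity implies unique maximizer: if η_k/η_· > 1/(1 + S(G)), then Pres(v_k) = 1 and Pres(v_{k'}) < 1 for every k' ≠ k. -/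
open Finset

theorem strictly_dominant_multiplicity_unique_max (V : Type*) [Fintype V] [DecidableEq V] [Nontrivial V]
    (d : V → V → ℝ) (η : V → ℝ)
    (hpos : ∀ x y : V, x ≠ y → 0 < d x y)
    (hzero : ∀ x : V, d x x = 0)
    (htri : ∀ x y z : V, d x z ≤ d x y + d y z)
    (hη : ∀ j : V, 0 ≤ η j) (hsum : 0 < ∑ j, η j)
    (k : V) (hk : 1 / (1 + SG V d) < η k / (∑ i, η i)) :
    Pres V d η k = 1 ∧ ∀ k' : V, k' ≠ k → Pres V d η k' < 1 := by
  have hSpos : 0 < SG V d := by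
    rw [SG, Finset.lt_inf'_iff]
    rintro ⟨a, b⟩ hp
    obtain ⟨-, -, hne⟩ := Finset.mem_offDiag.mp hp
    exact div_pos (hpos a b hne) (hpos b a hne.symm)
  have hSle : ∀ x y : V, x ≠ y → SG V d * d y x ≤ d x y := by
    intro x y hxy
    have h1 : SG V d ≤ d x y / d y x := by
      have hm : (x, y) ∈ (Finset.univ : Finset V).offDiag :=
        Finset.mem_offDiag.mpr ⟨Finset.mem_univ x, Finset.mem_univ y, hxy⟩
      rw [SG]
      exact Finset.inf'_le (fun p => d p.1 p.2 / d p.2 p.1) hm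
    exact (le_div_iff₀ (hpos y x hxy.symm)).mp h1
  have hkey : (∑ i, η i) < η k + η k * SG V d := by
    have h1S : (0:ℝ) < 1 + SG V d := by linarith
    have h2 := (div_lt_div_iff₀ h1S hsum).mp hk
    nlinarith
  have hηk : 0 < η k := by nlinarith [hη k, mul_nonneg (hη k) hSpos.le]
  have herase : ∑ i ∈ Finset.univ.erase k, η i = (∑ i, η i) - η k := by
    have := Finset.sum_erase_add Finset.univ η (Finset.mem_univ k)
    linarith
  -- Part 1 numerator bound
  have hnum1 : ∀ j : V, j ≠ k → (∑ i, η i * (d i k - d i j)) ≤ 0 := by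
    intro j hj
    have hsplit := Finset.sum_erase_add Finset.univ
      (fun i => η i * (d i k - d i j)) (Finset.mem_univ k)
    have hb : ∑ i ∈ Finset.univ.erase k, η i * (d i k - d i j)
        ≤ ∑ i ∈ Finset.univ.erase k, η i * d j k := by
      apply Finset.sum_le_sum
      intro i _
      have h1 : d i k - d i j ≤ d j k := by have := htri i j k; linarith
      exact mul_le_mul_of_nonneg_left h1 (hη i)
    have hE : ∑ i ∈ Finset.univ.erase k, η i * d j k = ((∑ i, η i) - η k) * d j k := by
      rw [← Finset.sum_mul, herase]
    have hdjk : 0 ≤ d j k := (hpos j k hj).le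
    have h2 : ((∑ i, η i) - η k) * d j k ≤ η k * SG V d * d j k := by
      apply mul_le_mul_of_nonneg_right _ hdjk
      linarith
    have h3 : η k * SG V d * d j k ≤ η k * d k j := by
      have h4 : SG V d * d j k ≤ d k j := hSle k j hj.symm
      calc η k * SG V d * d j k = η k * (SG V d * d j k) := by ring
        _ ≤ η k * d k j := mul_le_mul_of_nonneg_left h4 hηk.le
    have htk : η k * (d k k - d k j) = - (η k * d k j) := by rw [hzero]; ring
    linarith [hsplit, hb, hE, h2, h3, htk]
  -- Part 2 numerator bound (j = k, center k')
  have hnum2 : ∀ k' : V, k' ≠ k → 0 < (∑ i, η i * (d i k' - d i k)) := by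
    intro k' hk'
    have hsplit := Finset.sum_erase_add Finset.univ
      (fun i => η i * (d i k' - d i k)) (Finset.mem_univ k)
    have hb : ∑ i ∈ Finset.univ.erase k, (-(η i * d k' k))
        ≤ ∑ i ∈ Finset.univ.erase k, η i * (d i k' - d i k) := by
      apply Finset.sum_le_sum
      intro i _
      have h1 : -(d k' k) ≤ d i k' - d i k := by have := htri i k' k; linarith
      have := mul_le_mul_of_nonneg_left h1 (hη i)
      linarith [this]
    have hE : ∑ i ∈ Finset.univ.erase k, (-(η i * d k' k)) = -(((∑ i, η i) - η k) * d k' k) := by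
      rw [← herase, Finset.sum_mul]
      simp
    have hdk'k : 0 < d k' k := hpos k' k hk'
    have h4 : SG V d * d k' k ≤ d k k' := hSle k k' hk'.symm
    have h5 : η k * (SG V d * d k' k) ≤ η k * d k k' :=
      mul_le_mul_of_nonneg_left h4 hηk.le
    have htk : η k * (d k k' - d k k) = η k * d k k' := by rw [hzero]; ring
    have h6 : ((∑ i, η i) - η k) * d k' k < η k * SG V d * d k' k := by
      apply mul_lt_mul_of_pos_right _ hdk'k
      linarith
    nlinarith [hsplit, hb, hE, h5, htk, h6]
  obtain ⟨j0, hj0⟩ := exists_ne k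
  have hne1 : ((Finset.univ.erase k) : Finset V).Nonempty :=
    ⟨j0, Finset.mem_erase.mpr ⟨hj0, Finset.mem_univ j0⟩⟩
  constructor
  · -- Pres k = 1
    have hsup : (Finset.univ.erase k).sup'
        (by obtain ⟨j, hj⟩ := exists_ne k
            exact ⟨j, Finset.mem_erase.mpr ⟨hj, Finset.mem_univ j⟩⟩)
        (fun j => max 0 ((∑ i, η i * (d i k - d i j)) / ((∑ i, η i) * d k j))) = 0 := by
      apply le_antisymm
      · apply Finset.sup'_le
        intro j hjm
        have hjk : j ≠ k := (Finset.mem_erase.mp hjm).1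
        have hden : 0 ≤ (∑ i, η i) * d k j :=
          mul_nonneg hsum.le (hpos k j hjk.symm).le
        exact max_le le_rfl (div_nonpos_of_nonpos_of_nonneg (hnum1 j hjk) hden)
      · have hmem0 : j0 ∈ Finset.univ.erase k := Finset.mem_erase.mpr ⟨hj0, Finset.mem_univ j0⟩
        exact le_trans (le_max_left 0 _)
          (Finset.le_sup' (f := fun j => max 0 ((∑ i, η i * (d i k - d i j)) / ((∑ i, η i) * d k j))) hmem0)
    rw [Pres, hsup, mul_zero, sub_zero]
  · intro k' hk'
    rw [Pres]
    have hkm : k ∈ Finset.univ.erase k' := Finset.mem_erase.mpr ⟨hk'.symm, Finset.mem_univ k⟩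
    have hfrac : 0 < (∑ i, η i * (d i k' - d i k)) / ((∑ i, η i) * d k' k) :=
      div_pos (hnum2 k' hk') (mul_pos hsum (hpos k' k hk'))
    have hsup : 0 < (Finset.univ.erase k').sup'
        (by obtain ⟨j, hj⟩ := exists_ne k'
            exact ⟨j, Finset.mem_erase.mpr ⟨hj, Finset.mem_univ j⟩⟩)
        (fun j => max 0 ((∑ i, η i * (d i k' - d i j)) / ((∑ i, η i) * d k' j))) := by
      have hle := Finset.le_sup' (f := fun j => max 0 ((∑ i, η i * (d i k' - d i j)) / ((∑ i, η i) * d k' j))) hkm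
      have : 0 < max 0 ((∑ i, η i * (d i k' - d i k)) / ((∑ i, η i) * d k' k)) :=
        lt_max_of_lt_right hfrac
      exact lt_of_lt_of_le this hle
    linarith [mul_pos hSpos hsup]
end

section
/- Strictly dominant multiplicity makes v_k the unique prestige median vertex: if η_k/η_· > 1/(1 + S(G)), then for every j ≠ k, ∑_i η_i d(v_i,v_k) < ∑_i η_i d(v_i,v_j). -/
open Finset

theorem strictly_dominant_multiplicity_unique_median (V : Type*) [Fintype V] [DecidableEq V] [Nontrivial V]
    (d : V → V → ℝ) (η : V → ℝ)
    (hpos : ∀ x y : V, x ≠ y → 0 < d x y)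
    (hzero : ∀ x : V, d x x = 0)
    (htri : ∀ x y z : V, d x z ≤ d x y + d y z)
    (hη : ∀ j : V, 0 ≤ η j) (hsum : 0 < ∑ j, η j)
    (k : V) (hk : 1 / (1 + SG V d) < η k / (∑ i, η i)) :
    ∀ j : V, j ≠ k → ∑ i, η i * d i k < ∑ i, η i * d i j := by
  intro j hj
  set S := SG V d with hS
  -- S > 0
  have hSpos : 0 < S := by
    rw [hS, SG]
    rw [Finset.lt_inf'_iff]
    rintro ⟨a, b⟩ hab
    rw [Finset.mem_offDiag] at hab
    exact div_pos (hpos a b hab.2.2) (hpos b a (Ne.symm hab.2.2))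
  -- S ≤ d k j / d j k
  have hkj : (k, j) ∈ Finset.univ.offDiag :=
    Finset.mem_offDiag.mpr ⟨Finset.mem_univ _, Finset.mem_univ _, hj.symm⟩
  have hSle : S ≤ d k j / d j k := Finset.inf'_le _ hkj
  have hSle' : S * d j k ≤ d k j := (le_div_iff₀ (hpos j k hj)).mp hSle
  have h1S : 0 < 1 + S := by linarith
  -- from hk : (∑ η) < η k * (1 + S)
  have hmult : (∑ i, η i) < η k * (1 + S) := by
    have := (div_lt_div_iff₀ h1S hsum).mp hk
    linarith
  have hηk : 0 < η k := by
    by_contra h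
    push_neg at h
    nlinarith [hη k]
  -- key bound
  have key : ∑ i, η i * (d i k - d i j) ≤ (∑ i, η i - η k) * d j k - η k * d k j := by
    have hsplit : ∑ i, η i * (d i k - d i j)
        = (∑ i ∈ Finset.univ.erase k, η i * (d i k - d i j)) + η k * (d k k - d k j) :=
      (Finset.sum_erase_add _ _ (Finset.mem_univ k)).symm
    have hbound : ∑ i ∈ Finset.univ.erase k, η i * (d i k - d i j)
        ≤ ∑ i ∈ Finset.univ.erase k, η i * d j k := by
      apply Finset.sum_le_sum
      intro i _
      have : d i k - d i j ≤ d j k := by have := htri i j k; linarith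
      exact mul_le_mul_of_nonneg_left this (hη i)
    have hsum' : ∑ i ∈ Finset.univ.erase k, η i * d j k
        = (∑ i, η i - η k) * d j k := by
      rw [← Finset.sum_mul]
      congr 1
      have := Finset.sum_erase_add Finset.univ η (Finset.mem_univ k)
      linarith
    rw [hsplit, hzero k]
    calc (∑ i ∈ Finset.univ.erase k, η i * (d i k - d i j)) + η k * (0 - d k j)
        ≤ (∑ i ∈ Finset.univ.erase k, η i * d j k) + η k * (0 - d k j) := by linarith
      _ = (∑ i, η i - η k) * d j k - η k * d k j := by rw [hsum']; ring
  have hdjk : 0 < d j k := hpos j k hj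
  have hneg : (∑ i, η i - η k) * d j k - η k * d k j < 0 := by
    have h1 : (∑ i, η i - η k) * d j k < η k * S * d j k := by
      apply mul_lt_mul_of_pos_right _ hdjk
      nlinarith
    nlinarith
  have heq : ∑ i, η i * (d i k - d i j) = (∑ i, η i * d i k) - ∑ i, η i * d i j := by
    rw [← Finset.sum_sub_distrib]
    apply Finset.sum_congr rfl
    intro i _; ring
  have : (∑ i, η i * d i k) - (∑ i, η i * d i j) < 0 := by
    rw [← heq]; linarith
  linarith
end

section
/- Lower bound on L1 prestige: Pres(v_k) ≥ min{(1 + S(G))·η_k/η_·, 1} for every vertex v_k. -/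
open Finset

theorem pres_lower_bound (V : Type*) [Fintype V] [DecidableEq V] [Nontrivial V]
    (d : V → V → ℝ) (η : V → ℝ)
    (hpos : ∀ x y : V, x ≠ y → 0 < d x y)
    (hzero : ∀ x : V, d x x = 0)
    (htri : ∀ x y z : V, d x z ≤ d x y + d y z)
    (hη : ∀ j : V, 0 ≤ η j) (hsum : 0 < ∑ j, η j) (k : V) :
    min ((1 + SG V d) * η k / (∑ i, η i)) 1 ≤ Pres V d η k := by
  have hS0 : 0 < SG V d := by
    unfold SG
    refine (Finset.lt_inf'_iff (α := ℝ) (s := (Finset.univ : Finset V).offDiag)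
      (f := fun p => d p.1 p.2 / d p.2 p.1) _).mpr ?_
    rintro ⟨x, y⟩ hp
    obtain ⟨-, -, hxy⟩ := Finset.mem_offDiag.mp hp
    exact div_pos (hpos x y hxy) (hpos y x (Ne.symm hxy))
  have hSle : ∀ x y : V, x ≠ y → SG V d ≤ d x y / d y x := by
    intro x y hxy
    have hm : ((x, y) : V × V) ∈ (Finset.univ : Finset V).offDiag :=
      Finset.mem_offDiag.mpr ⟨Finset.mem_univ x, Finset.mem_univ y, hxy⟩
    exact Finset.inf'_le (fun p : V × V => d p.1 p.2 / d p.2 p.1) hm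
  set T := ∑ i, η i with hT
  set a := (1 + SG V d) * η k / T with ha
  have hηk : η k ≤ T := Finset.single_le_sum (fun i _ => hη i) (Finset.mem_univ k)
  have Hmy : (Finset.univ.erase k).Nonempty := by
    obtain ⟨j, hj⟩ := exists_ne k
    exact ⟨j, Finset.mem_erase.mpr ⟨hj, Finset.mem_univ j⟩⟩
  have key : ∀ j ∈ Finset.univ.erase k,
      SG V d * max 0 ((∑ i, η i * (d i k - d i j)) / (T * d k j)) ≤ 1 - min a 1 := by
    intro j hj
    have hjk : j ≠ k := (Finset.mem_erase.mp hj).1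
    have hD : 0 < d k j := hpos k j (Ne.symm hjk)
    have hE : 0 < d j k := hpos j k hjk
    have hSE : SG V d * d j k ≤ d k j := (le_div_iff₀ hE).mp (hSle k j (Ne.symm hjk))
    set N := ∑ i, η i * (d i k - d i j) with hN
    by_cases hA : N / (T * d k j) ≤ 0
    · rw [max_eq_left hA, mul_zero]
      have : min a 1 ≤ 1 := min_le_right a 1
      linarith
    · push_neg at hA
      rw [max_eq_right hA.le]
      have h1 : N ≤ ∑ i, η i * (if i = k then -(d k j) else d j k) := by
        apply Finset.sum_le_sum
        intro i _
        by_cases hik : i = k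
        · subst hik; simp [hzero]
        · rw [if_neg hik]
          have := htri i j k
          nlinarith [hη i]
      have h2 : (∑ i, η i * (if i = k then -(d k j) else d j k))
          = (T - η k) * d j k - η k * d k j := by
        rw [← Finset.sum_erase_add _ _ (Finset.mem_univ k)]
        have hrw : ∑ i ∈ Finset.univ.erase k, η i * (if i = k then -(d k j) else d j k)
            = (∑ i ∈ Finset.univ.erase k, η i) * d j k := by
          rw [Finset.sum_mul]
          apply Finset.sum_congr rfl
          intro i hi
          rw [if_neg (Finset.mem_erase.mp hi).1]
        have hTk : ∑ i ∈ Finset.univ.erase k, η i = T - η k := by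
          have := Finset.sum_erase_add Finset.univ η (Finset.mem_univ k)
          rw [hT]; linarith
        rw [hrw, if_pos rfl, hTk]; ring
      have hNle : N ≤ (T - η k) * d j k - η k * d k j := h2 ▸ h1
      have hTD : 0 < T * d k j := mul_pos hsum hD
      have keyineq : SG V d * (N / (T * d k j)) ≤ 1 - (1 + SG V d) * η k / T := by
        rw [mul_div_assoc', div_le_iff₀ hTD]
        have expand : (1 - (1 + SG V d) * η k / T) * (T * d k j)
            = T * d k j - (1 + SG V d) * η k * d k j := by
          field_simp
        rw [expand]
        have hTη : 0 ≤ T - η k := by linarith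
        nlinarith [mul_le_mul_of_nonneg_left hNle hS0.le,
          mul_le_mul_of_nonneg_left hSE hTη]
      have hmin : min a 1 ≤ a := min_le_left a 1
      rw [ha] at hmin
      linarith
  have hsup : (Finset.univ.erase k).sup'
      Hmy (fun j => max 0 ((∑ i, η i * (d i k - d i j)) / (T * d k j)))
      ≤ (1 - min a 1) / SG V d :=
    Finset.sup'_le _ _ (fun j hj => (le_div_iff₀' hS0).mpr (key j hj))
  have hmain : SG V d * (Finset.univ.erase k).sup'
      Hmy (fun j => max 0 ((∑ i, η i * (d i k - d i j)) / (T * d k j)))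
      ≤ 1 - min a 1 := (le_div_iff₀' hS0).mp hsup
  have final : min a 1 ≤ 1 - SG V d * (Finset.univ.erase k).sup'
      Hmy (fun j => max 0 ((∑ i, η i * (d i k - d i j)) / (T * d k j))) := by
    linarith
  exact final
end

section
/- Equivalence of definitions: the infimum formulation of L1 prestige equals the explicit maximum formula; i.e., inf{w ≥ 0 : v_k is a prestige median vertex when its normalized multiplicity is incremented by w} equals max_{j≠k} max(0, ∑_i η_i(d(v_i,v_k) − d(v_i,v_j)) / (η_· d(v_k,v_j))). -/
open Finset

theorem inf_formulation_eq_max_formula (V : Type*) [Fintype V] [DecidableEq V] [Nontrivial V]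
    (d : V → V → ℝ) (η : V → ℝ)
    (hpos : ∀ x y : V, x ≠ y → 0 < d x y)
    (hzero : ∀ x : V, d x x = 0)
    (hη : ∀ j : V, 0 ≤ η j) (hsum : 0 < ∑ j, η j)
    (k : V) :
    sInf {w : ℝ | 0 ≤ w ∧ ∀ j : V,
        ∑ i, (η i / (∑ l, η l) + if i = k then w else 0) * d i k ≤
          ∑ i, (η i / (∑ l, η l) + if i = k then w else 0) * d i j} =
      (Finset.univ.erase k).sup'
        (by obtain ⟨j, hj⟩ := exists_ne k; exact ⟨j, Finset.mem_erase.mpr ⟨hj, Finset.mem_univ j⟩⟩)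
        (fun j => max 0 ((∑ i, η i * (d i k - d i j)) / ((∑ i, η i) * d k j))) := by
  have hne : (Finset.univ.erase k).Nonempty := by
    obtain ⟨j, hj⟩ := exists_ne k
    exact ⟨j, Finset.mem_erase.mpr ⟨hj, Finset.mem_univ j⟩⟩
  set S : ℝ := ∑ l, η l with hSdef
  have hSpos : 0 < S := hsum
  have hsum_eq : ∀ (w : ℝ) (c : V → ℝ),
      ∑ i, (η i / S + if i = k then w else 0) * c i = (∑ i, η i * c i) / S + w * c k := by
    intro w c
    rw [Finset.sum_congr rfl (fun i _ => add_mul _ _ _), Finset.sum_add_distrib]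
    congr 1
    · rw [Finset.sum_div]
      exact Finset.sum_congr rfl fun i _ => div_mul_eq_mul_div _ _ _
    · simp [ite_mul]
  have hX : ∀ j : V, ∑ i, η i * (d i k - d i j)
      = ∑ i, η i * d i k - ∑ i, η i * d i j := by
    intro j
    rw [← Finset.sum_sub_distrib]
    exact Finset.sum_congr rfl fun i _ => mul_sub _ _ _
  have key : {w : ℝ | 0 ≤ w ∧ ∀ j : V,
        ∑ i, (η i / S + if i = k then w else 0) * d i k ≤
          ∑ i, (η i / S + if i = k then w else 0) * d i j}
      = Set.Ici ((Finset.univ.erase k).sup' hne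
          (fun j => max 0 ((∑ i, η i * (d i k - d i j)) / (S * d k j)))) := by
    ext w
    simp only [Set.mem_setOf_eq, Set.mem_Ici, Finset.sup'_le_iff]
    constructor
    · rintro ⟨hw, hcond⟩ j hj
      rw [Finset.mem_erase] at hj
      have hD : 0 < d k j := hpos k j (Ne.symm hj.1)
      refine max_le hw ?_
      rw [div_le_iff₀ (mul_pos hSpos hD), hX]
      have h := hcond j
      rw [hsum_eq, hsum_eq, hzero, mul_zero, add_zero] at h
      have h2 := mul_le_mul_of_nonneg_right h hSpos.le
      rw [div_mul_cancel₀ _ hSpos.ne', add_mul, div_mul_cancel₀ _ hSpos.ne'] at h2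
      nlinarith
    · intro hM
      obtain ⟨j0, hj0⟩ := hne
      have hw : 0 ≤ w := le_trans (le_max_left _ _) (hM j0 hj0)
      refine ⟨hw, fun j => ?_⟩
      rw [hsum_eq, hsum_eq, hzero, mul_zero, add_zero]
      by_cases hjk : j = k
      · subst hjk; simp [hzero]
      · have hj : j ∈ Finset.univ.erase k := Finset.mem_erase.mpr ⟨hjk, Finset.mem_univ j⟩
        have hD : 0 < d k j := hpos k j (Ne.symm hjk)
        have hA : (∑ i, η i * (d i k - d i j)) / (S * d k j) ≤ w :=
          le_trans (le_max_right _ _) (hM j hj)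
        rw [div_le_iff₀ (mul_pos hSpos hD), hX] at hA
        rw [div_le_iff₀ hSpos, add_mul, div_mul_cancel₀ _ hSpos.ne']
        nlinarith
  rw [key, csInf_Ici]
end

section
/- Modified-graph median property: if vertex v_k's multiplicity is increased by η_·/S(G) (with η_k > 0), then v_k is the unique prestige median vertex of the modified graph. -/
open Finset

theorem modified_graph_unique_median (V : Type*) [Fintype V] [DecidableEq V] [Nontrivial V]
    (d : V → V → ℝ) (η : V → ℝ)
    (hpos : ∀ x y : V, x ≠ y → 0 < d x y)
    (hzero : ∀ x : V, d x x = 0)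
    (htri : ∀ x y z : V, d x z ≤ d x y + d y z)
    (hη : ∀ j : V, 0 ≤ η j) (hsum : 0 < ∑ j, η j)
    (k : V) (hk : 0 < η k) :
    ∀ j : V, j ≠ k →
      ∑ i, (η i + if i = k then (∑ l, η l) / SG V d else 0) * d i k <
        ∑ i, (η i + if i = k then (∑ l, η l) / SG V d else 0) * d i j := by
  intro j hj
  have hne : (Finset.univ.offDiag : Finset (V × V)).Nonempty := by
    obtain ⟨a, b, hab⟩ := exists_pair_ne V
    exact ⟨(a, b), Finset.mem_offDiag.mpr ⟨Finset.mem_univ a, Finset.mem_univ b, hab⟩⟩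
  have hSpos : 0 < SG V d := by
    rw [SG, Finset.lt_inf'_iff]
    intro p hp
    have hpne : p.1 ≠ p.2 := (Finset.mem_offDiag.mp hp).2.2
    exact div_pos (hpos _ _ hpne) (hpos _ _ hpne.symm)
  have hSle : SG V d ≤ d k j / d j k := by
    have : ((k, j) : V × V) ∈ Finset.univ.offDiag :=
      Finset.mem_offDiag.mpr ⟨Finset.mem_univ _, Finset.mem_univ _, hj.symm⟩
    exact Finset.inf'_le _ this
  have hdkj : 0 < d k j := hpos _ _ hj.symm
  have hdjk : 0 < d j k := hpos _ _ hj
  set c : ℝ := (∑ l, η l) / SG V d with hc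
  have hsplit : ∀ m : V, ∑ i, (η i + if i = k then c else 0) * d i m
      = (∑ i, η i * d i m) + c * d k m := by
    intro m
    rw [show (∑ i, (η i + if i = k then c else 0) * d i m)
        = ∑ i, (η i * d i m + (if i = k then c * d i m else 0)) by
      apply Finset.sum_congr rfl; intro i _; split <;> ring]
    rw [Finset.sum_add_distrib, Finset.sum_ite_eq' Finset.univ k (fun i => c * d i m)]
    simp
  rw [hsplit k, hsplit j, hzero k, mul_zero, add_zero]
  have hstrict : (∑ i, η i * d i k) < ∑ i, η i * (d i j + d j k) := by
    apply Finset.sum_lt_sum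
    · intro i _
      exact mul_le_mul_of_nonneg_left (htri i j k) (hη i)
    · refine ⟨k, Finset.mem_univ k, ?_⟩
      rw [hzero k, mul_zero]
      exact mul_pos hk (add_pos hdkj hdjk)
  have hsum2 : (∑ i, η i * (d i j + d j k)) = (∑ i, η i * d i j) + (∑ l, η l) * d j k := by
    simp [mul_add, Finset.sum_add_distrib, Finset.sum_mul]
  have hlast : (∑ l, η l) * d j k ≤ c * d k j := by
    rw [hc, div_mul_eq_mul_div, le_div_iff₀ hSpos]
    have h1 : SG V d * d j k ≤ d k j := (le_div_iff₀ hdjk).mp hSle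
    nlinarith [hsum.le]
  linarith [hstrict, hsum2 ▸ hstrict]
end
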